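/- arXiv:math/0005053 — 2 statements merged into one kernel-verified Lean document; each statement's English description precedes it below -/
import Mathlib

section
/- For every n ≥ 6, D has a winning strategy in Dukego on the 6×n board when D has the first move. -/
/-!
Formalization of Dukego (standard version).

A square is a pair (row, column), 1-indexed: row 1 is the southernmost row,
row m the northernmost; column 1 is the westernmost column, column n the
easternmost.  The board is m×n (m rows, n columns).
-/

/-- A square of the (generalized) board: (row, column), 1-indexed. -/
abbrev Square : Type := ℕ × ℕ

/-- The square `s` lies on the m×n board. -/
def onBoard (m n : ℕ) (s : Square) : Prop :=
  1 ≤ s.1 ∧ s.1 ≤ m ∧ 1 ≤ s.2 ∧ s.2 ≤ n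

/-- The square `s` is an edge square of the m×n board. -/
def isEdge (m n : ℕ) (s : Square) : Prop :=
  onBoard m n s ∧ (s.1 = 1 ∨ s.1 = m ∨ s.2 = 1 ∨ s.2 = n)

/-- Two squares are orthogonally adjacent (one step north, south, east or west). -/
def Adjacent (s t : Square) : Prop :=
  (s.1 = t.1 ∧ (s.2 = t.2 + 1 ∨ t.2 = s.2 + 1)) ∨
  (s.2 = t.2 ∧ (s.1 = t.1 + 1 ∨ t.1 = s.1 + 1))

/-- The Duke's starting square: the central square of the m×n board; if m
(resp. n) is even, the southernmost (resp. easternmost) of the central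
rows (resp. columns) is chosen. -/
def startSquare (m n : ℕ) : Square := ((m + 1) / 2, n / 2 + 1)

/-- A position of (standard) Dukego: the Duke's square together with the set of
squares occupied by G's black stones. -/
structure Pos where
  duke : Square
  stones : Set Square

/-- A legal move of the Duke on the m×n board: one square vertically or
horizontally, staying on the board, onto a square not occupied by a stone. -/
def DukeMove (m n : ℕ) (p q : Pos) : Prop :=
  Adjacent p.duke q.duke ∧ onBoard m n q.duke ∧ q.duke ∉ p.stones ∧
    q.stones = p.stones

/-- A legal move of G on the m×n board: place a black stone on an empty square
of the board not occupied by the Duke. -/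
def GMove (m n : ℕ) (p q : Pos) : Prop :=
  ∃ s, onBoard m n s ∧ s ∉ p.stones ∧ s ≠ p.duke ∧
    q.duke = p.duke ∧ q.stones = insert s p.stones

/-- `DWins m n t p`: with the m×n board in position `p`, and with it being
D's turn exactly when `t = true`, the player D (moving the Duke) can force a
win, i.e. force the Duke to reach an edge square of the board. -/
inductive DWins (m n : ℕ) : Bool → Pos → Prop where
  /-- The Duke has reached an edge square: D has won. -/
  | edge (t : Bool) (p : Pos) (h : isEdge m n p.duke) : DWins m n t p
  /-- It is D's turn and some legal Duke move leads to a D-winning position. -/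
  | dturn (p q : Pos) (hm : DukeMove m n p q) (hw : DWins m n false q) :
      DWins m n true p
  /-- It is G's turn and every legal G move leads to a D-winning position. -/
  | gturn (p : Pos) (h : ∀ q, GMove m n p q → DWins m n true q) :
      DWins m n false p

/-- `GWins m n t p`: with the m×n board in position `p`, and with it being
D's turn exactly when `t = true`, the player G (placing black stones) can force
a win, i.e. force a situation where, on D's turn, the Duke (not being on an
edge square) has no legal move.  (When it is D's turn, the Duke must not be on
an edge square and every Duke move, if any, must lead to a G-winning position;
in particular a stuck Duke off the edge is an immediate win for G.) -/
inductive GWins (m n : ℕ) : Bool → Pos → Prop where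
  | dturn (p : Pos) (he : ¬ isEdge m n p.duke)
      (h : ∀ q, DukeMove m n p q → GWins m n false q) : GWins m n true p
  | gturn (p q : Pos) (he : ¬ isEdge m n p.duke) (hm : GMove m n p q)
      (hw : GWins m n true q) : GWins m n false p

/-- The starting position: the Duke on its starting square, no stones played. -/
def startPos (m n : ℕ) : Pos := ⟨startSquare m n, ∅⟩

/-- A well-formed position: the Duke is on the board, not on a stone, and all
stones are on the board. -/
def Wellformed (m n : ℕ) (p : Pos) : Prop :=
  onBoard m n p.duke ∧ p.duke ∉ p.stones ∧ ∀ s ∈ p.stones, onBoard m n s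


/-- Ladder lemma: on the 6×n board, if the Duke stands at (2,c) on D's turn,
and either (1,c) is free or every square of rows 1 and 2 strictly east of
column c is free, then D wins. Induction on n - c. -/
lemma ladder (n : ℕ) : ∀ k c S, 1 ≤ c → c ≤ n → n - c = k →
    ((1, c) ∉ S ∨ ∀ j, c < j → j ≤ n → (1, j) ∉ S ∧ (2, j) ∉ S) →
    DWins 6 n true ⟨(2, c), S⟩ := by
  intro k
  induction k with
  | zero =>
    intro c S hc1 hcn hk _
    have hcn' : c = n := by omega
    exact DWins.edge _ _ ⟨⟨by norm_num, by norm_num, hc1, hcn⟩,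
      Or.inr (Or.inr (Or.inr hcn'))⟩
  | succ k ih =>
    intro c S hc1 hcn hk hdisj
    have hclt : c < n := by omega
    rcases hdisj with h1 | h2
    · -- (1,c) is free: step to it and win
      refine DWins.dturn _ ⟨(1, c), S⟩ ?_ (DWins.edge _ _ ?_)
      · exact ⟨Or.inr ⟨rfl, Or.inl rfl⟩, ⟨le_refl 1, by norm_num, hc1, hcn⟩, h1, rfl⟩
      · exact ⟨⟨le_refl 1, by norm_num, hc1, hcn⟩, Or.inl rfl⟩
    · -- step east to (2, c+1)
      have hfree : (2, c + 1) ∉ S := (h2 (c + 1) (by omega) (by omega)).2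
      refine DWins.dturn _ ⟨(2, c + 1), S⟩
        ⟨Or.inl ⟨rfl, Or.inr rfl⟩, ⟨by norm_num, by norm_num, by show 1 ≤ c + 1; omega, by show c + 1 ≤ n; omega⟩,
          hfree, rfl⟩ ?_
      refine DWins.gturn _ ?_
      rintro q ⟨s, _, _, _, hqd, hqs⟩
      have hq : q = ⟨(2, c + 1), insert s S⟩ := by
        cases q; simp_all
      rw [hq]
      refine ih (c + 1) (insert s S) (by omega) (by omega) (by omega) ?_
      by_cases hs : s = (1, c + 1)
      · right
        intro j hj1 hj2
        have hne1 : (1, j) ∉ insert s S := by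
          simp only [Set.mem_insert_iff, hs]
          push_neg
          exact ⟨by simp; omega, (h2 j (by omega) hj2).1⟩
        have hne2 : (2, j) ∉ insert s S := by
          simp only [Set.mem_insert_iff, hs]
          push_neg
          exact ⟨by simp, (h2 j (by omega) hj2).2⟩
        exact ⟨hne1, hne2⟩
      · left
        simp only [Set.mem_insert_iff]
        push_neg
        exact ⟨fun h => hs h.symm, (h2 (c + 1) (by omega) (by omega)).1⟩

/-- for every n ≥ 6, D has a winning strategy in Dukego on the
6×n board when D has the first move. -/
theorem dukego_6xn_D_wins_first (n : ℕ) (hn : 6 ≤ n) :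
    DWins 6 n true (startPos 6 n) := by
  -- first move: from (3, n/2+1) down to (2, n/2+1)
  set c : ℕ := n / 2 + 1 with hc
  have hc1 : 1 ≤ c := by omega
  have hcn : c ≤ n := by omega
  refine DWins.dturn _ ⟨(2, c), ∅⟩ ?_ ?_
  · refine ⟨Or.inr ⟨rfl, Or.inl rfl⟩, ⟨by norm_num, by norm_num, hc1, hcn⟩, ?_, rfl⟩
    simp [startPos]
  · refine DWins.gturn _ ?_
    rintro q ⟨s, _, _, _, hqd, hqs⟩
    have hq : q = ⟨(2, c), insert s (∅ : Set Square)⟩ := by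
      cases q; simp_all [startPos]
    rw [hq]
    refine ladder n (n - c) c _ hc1 hcn rfl ?_
    by_cases hs : s = (1, c)
    · right
      intro j hj1 hj2
      constructor <;> simp [hs] <;> omega
    · left
      simp only [Set.mem_insert_iff, Set.mem_empty_iff_false, or_false]
      exact fun h => hs h.symm
end

section
/- D has a winning strategy in Dukego on the 6×8 board regardless of which player moves first. -/
section DukegoProof

/-- Not a member of an inserted set. -/
lemma nmi {t s : Square} {S : Set Square} (h1 : t ≠ s) (h2 : t ∉ S) :
    t ∉ insert s S := fun h => (Set.mem_insert_iff.1 h).elim h1 h2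

/-- Convenient form of the G-turn rule. -/
lemma gstep {m n : ℕ} {d : Square} {S : Set Square}
    (h : ∀ s : Square, onBoard m n s → s ∉ S → s ≠ d →
      DWins m n true ⟨d, insert s S⟩) :
    DWins m n false ⟨d, S⟩ := by
  apply DWins.gturn
  rintro ⟨d', S'⟩ ⟨s, hb, hn, hne, hd, hst⟩
  simp only at hd hst
  subst hd; subst hst
  exact h s hb hn hne

/-- Convenient form of the D-turn rule. -/
lemma dstep {m n : ℕ} {d : Square} {S : Set Square} (e : Square)
    (h1 : Adjacent d e) (h2 : onBoard m n e) (h3 : e ∉ S)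
    (h4 : DWins m n false ⟨e, S⟩) : DWins m n true ⟨d, S⟩ :=
  DWins.dturn _ ⟨e, S⟩ ⟨h1, h2, h3, rfl⟩ h4

/-- D moves to an edge square and wins. -/
lemma dstepEdge {m n : ℕ} {d : Square} {S : Set Square} (e : Square)
    (h1 : Adjacent d e) (h2 : onBoard m n e) (h3 : e ∉ S)
    (h4 : isEdge m n e) : DWins m n true ⟨d, S⟩ :=
  dstep e h1 h2 h3 (DWins.edge _ _ h4)

/-- March left along row 2: duke at (2,2), double threat (1,2) and (2,1). -/
lemma marchL2 (S : Set Square) (a2 : (1,2) ∉ S) (b1 : (2,1) ∉ S) :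
    DWins 6 8 false ⟨(2,2), S⟩ := by
  apply gstep
  intro s hb hn hne
  by_cases hs : s = (1,2)
  · subst hs
    exact dstepEdge (2,1) (by simp [Adjacent]) (by simp [onBoard])
      (nmi (by simp) b1) (by simp [isEdge, onBoard])
  · exact dstepEdge (1,2) (by simp [Adjacent]) (by simp [onBoard])
      (nmi (fun e => hs e.symm) a2) (by simp [isEdge, onBoard])

lemma marchL3 (S : Set Square) (a3 : (1,3) ∉ S) (a2 : (1,2) ∉ S)
    (b2 : (2,2) ∉ S) (b1 : (2,1) ∉ S) :
    DWins 6 8 false ⟨(2,3), S⟩ := by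
  apply gstep
  intro s hb hn hne
  by_cases hs : s = (1,3)
  · subst hs
    exact dstep (2,2) (by simp [Adjacent]) (by simp [onBoard]) (nmi (by simp) b2)
      (marchL2 _ (nmi (by simp) a2) (nmi (by simp) b1))
  · exact dstepEdge (1,3) (by simp [Adjacent]) (by simp [onBoard])
      (nmi (fun e => hs e.symm) a3) (by simp [isEdge, onBoard])

lemma marchL4 (S : Set Square) (a4 : (1,4) ∉ S) (a3 : (1,3) ∉ S) (a2 : (1,2) ∉ S)
    (b3 : (2,3) ∉ S) (b2 : (2,2) ∉ S) (b1 : (2,1) ∉ S) :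
    DWins 6 8 false ⟨(2,4), S⟩ := by
  apply gstep
  intro s hb hn hne
  by_cases hs : s = (1,4)
  · subst hs
    exact dstep (2,3) (by simp [Adjacent]) (by simp [onBoard]) (nmi (by simp) b3)
      (marchL3 _ (nmi (by simp) a3) (nmi (by simp) a2) (nmi (by simp) b2)
        (nmi (by simp) b1))
  · exact dstepEdge (1,4) (by simp [Adjacent]) (by simp [onBoard])
      (nmi (fun e => hs e.symm) a4) (by simp [isEdge, onBoard])

lemma marchL5 (S : Set Square) (a5 : (1,5) ∉ S) (a4 : (1,4) ∉ S) (a3 : (1,3) ∉ S)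
    (a2 : (1,2) ∉ S) (b4 : (2,4) ∉ S) (b3 : (2,3) ∉ S) (b2 : (2,2) ∉ S)
    (b1 : (2,1) ∉ S) :
    DWins 6 8 false ⟨(2,5), S⟩ := by
  apply gstep
  intro s hb hn hne
  by_cases hs : s = (1,5)
  · subst hs
    exact dstep (2,4) (by simp [Adjacent]) (by simp [onBoard]) (nmi (by simp) b4)
      (marchL4 _ (nmi (by simp) a4) (nmi (by simp) a3) (nmi (by simp) a2)
        (nmi (by simp) b3) (nmi (by simp) b2) (nmi (by simp) b1))
  · exact dstepEdge (1,5) (by simp [Adjacent]) (by simp [onBoard])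
      (nmi (fun e => hs e.symm) a5) (by simp [isEdge, onBoard])

/-- March right along row 2: duke at (2,7), double threat (1,7) and (2,8). -/
lemma marchR7 (S : Set Square) (a7 : (1,7) ∉ S) (b8 : (2,8) ∉ S) :
    DWins 6 8 false ⟨(2,7), S⟩ := by
  apply gstep
  intro s hb hn hne
  by_cases hs : s = (1,7)
  · subst hs
    exact dstepEdge (2,8) (by simp [Adjacent]) (by simp [onBoard])
      (nmi (by simp) b8) (by simp [isEdge, onBoard])
  · exact dstepEdge (1,7) (by simp [Adjacent]) (by simp [onBoard])
      (nmi (fun e => hs e.symm) a7) (by simp [isEdge, onBoard])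

lemma marchR6 (S : Set Square) (a6 : (1,6) ∉ S) (a7 : (1,7) ∉ S)
    (b7 : (2,7) ∉ S) (b8 : (2,8) ∉ S) :
    DWins 6 8 false ⟨(2,6), S⟩ := by
  apply gstep
  intro s hb hn hne
  by_cases hs : s = (1,6)
  · subst hs
    exact dstep (2,7) (by simp [Adjacent]) (by simp [onBoard]) (nmi (by simp) b7)
      (marchR7 _ (nmi (by simp) a7) (nmi (by simp) b8))
  · exact dstepEdge (1,6) (by simp [Adjacent]) (by simp [onBoard])
      (nmi (fun e => hs e.symm) a6) (by simp [isEdge, onBoard])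

lemma marchR5 (S : Set Square) (a5 : (1,5) ∉ S) (a6 : (1,6) ∉ S) (a7 : (1,7) ∉ S)
    (b6 : (2,6) ∉ S) (b7 : (2,7) ∉ S) (b8 : (2,8) ∉ S) :
    DWins 6 8 false ⟨(2,5), S⟩ := by
  apply gstep
  intro s hb hn hne
  by_cases hs : s = (1,5)
  · subst hs
    exact dstep (2,6) (by simp [Adjacent]) (by simp [onBoard]) (nmi (by simp) b6)
      (marchR6 _ (nmi (by simp) a6) (nmi (by simp) a7) (nmi (by simp) b7)
        (nmi (by simp) b8))
  · exact dstepEdge (1,5) (by simp [Adjacent]) (by simp [onBoard])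
      (nmi (fun e => hs e.symm) a5) (by simp [isEdge, onBoard])

/-- March down column 7: duke at (5,7), double threat (5,8) and (6,7). -/
lemma marchD5 (S : Set Square) (a8 : (5,8) ∉ S) (b7 : (6,7) ∉ S) :
    DWins 6 8 false ⟨(5,7), S⟩ := by
  apply gstep
  intro s hb hn hne
  by_cases hs : s = (5,8)
  · subst hs
    exact dstepEdge (6,7) (by simp [Adjacent]) (by simp [onBoard])
      (nmi (by simp) b7) (by simp [isEdge, onBoard])
  · exact dstepEdge (5,8) (by simp [Adjacent]) (by simp [onBoard])
      (nmi (fun e => hs e.symm) a8) (by simp [isEdge, onBoard])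

lemma marchD4 (S : Set Square) (a4 : (4,8) ∉ S) (a5 : (5,8) ∉ S)
    (b5 : (5,7) ∉ S) (b6 : (6,7) ∉ S) :
    DWins 6 8 false ⟨(4,7), S⟩ := by
  apply gstep
  intro s hb hn hne
  by_cases hs : s = (4,8)
  · subst hs
    exact dstep (5,7) (by simp [Adjacent]) (by simp [onBoard]) (nmi (by simp) b5)
      (marchD5 _ (nmi (by simp) a5) (nmi (by simp) b6))
  · exact dstepEdge (4,8) (by simp [Adjacent]) (by simp [onBoard])
      (nmi (fun e => hs e.symm) a4) (by simp [isEdge, onBoard])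

lemma marchD3 (S : Set Square) (a3 : (3,8) ∉ S) (a4 : (4,8) ∉ S) (a5 : (5,8) ∉ S)
    (b4 : (4,7) ∉ S) (b5 : (5,7) ∉ S) (b6 : (6,7) ∉ S) :
    DWins 6 8 false ⟨(3,7), S⟩ := by
  apply gstep
  intro s hb hn hne
  by_cases hs : s = (3,8)
  · subst hs
    exact dstep (4,7) (by simp [Adjacent]) (by simp [onBoard]) (nmi (by simp) b4)
      (marchD4 _ (nmi (by simp) a4) (nmi (by simp) a5) (nmi (by simp) b5)
        (nmi (by simp) b6))
  · exact dstepEdge (3,8) (by simp [Adjacent]) (by simp [onBoard])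
      (nmi (fun e => hs e.symm) a3) (by simp [isEdge, onBoard])

/-- From (2,5) with an arbitrary single stone, D (to move is G) wins. -/
lemma from25 (s1 : Square) : DWins 6 8 false ⟨(2,5), insert s1 (∅ : Set Square)⟩ := by
  by_cases hA : s1 = (1,5)
  · subst hA
    apply gstep
    intro s2 hb2 hn2 hne2
    by_cases hL : s2 = (2,4) ∨ s2 = (1,4) ∨ s2 = (1,3) ∨ s2 = (1,2) ∨
        s2 = (2,3) ∨ s2 = (2,2) ∨ s2 = (2,1)
    · rcases hL with rfl | rfl | rfl | rfl | rfl | rfl | rfl <;>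
      exact dstep (2,6) (by simp [Adjacent]) (by simp [onBoard]) (by simp)
        (marchR6 _ (by simp) (by simp) (by simp) (by simp))
    · push_neg at hL
      obtain ⟨h1, h2, h3, h4, h5, h6, h7⟩ := hL
      exact dstep (2,4) (by simp [Adjacent]) (by simp [onBoard])
        (nmi (fun e => h1 e.symm) (by simp))
        (marchL4 _ (nmi (fun e => h2 e.symm) (by simp))
          (nmi (fun e => h3 e.symm) (by simp))
          (nmi (fun e => h4 e.symm) (by simp))
          (nmi (fun e => h5 e.symm) (by simp))
          (nmi (fun e => h6 e.symm) (by simp))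
          (nmi (fun e => h7 e.symm) (by simp)))
  · by_cases hB : s1 = (1,4) ∨ s1 = (1,3) ∨ s1 = (1,2) ∨ s1 = (2,4) ∨
        s1 = (2,3) ∨ s1 = (2,2) ∨ s1 = (2,1)
    · rcases hB with rfl | rfl | rfl | rfl | rfl | rfl | rfl <;>
      exact marchR5 _ (by simp) (by simp) (by simp) (by simp) (by simp) (by simp)
    · push_neg at hB
      obtain ⟨h1, h2, h3, h4, h5, h6, h7⟩ := hB
      exact marchL5 _ (nmi (fun e => hA e.symm) (by simp))
        (nmi (fun e => h1 e.symm) (by simp))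
        (nmi (fun e => h2 e.symm) (by simp))
        (nmi (fun e => h3 e.symm) (by simp))
        (nmi (fun e => h4 e.symm) (by simp))
        (nmi (fun e => h5 e.symm) (by simp))
        (nmi (fun e => h6 e.symm) (by simp))
        (nmi (fun e => h7 e.symm) (by simp))

end DukegoProof

/-- D has a winning strategy in Dukego on the 6×8 board
regardless of which player moves first. -/
theorem dukego_6x8_D_wins : ∀ t : Bool, DWins 6 8 t (startPos 6 8) := by
  have hstart : startPos 6 8 = ⟨(3,5), (∅ : Set Square)⟩ := by
    simp [startPos, startSquare]
  intro t
  rw [hstart]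
  cases t
  · -- G moves first
    apply gstep
    intro s1 hb1 hn1 hne1
    by_cases h1 : s1 = (2,5)
    · subst h1
      apply dstep (3,6) (by simp [Adjacent]) (by simp [onBoard]) (by simp)
      apply gstep
      intro s2 hb2 hn2 hne2
      by_cases h2 : s2 = (1,6) ∨ s2 = (1,7) ∨ s2 = (2,6) ∨ s2 = (2,7) ∨ s2 = (2,8)
      · rcases h2 with rfl | rfl | rfl | rfl | rfl <;>
        exact dstep (3,7) (by simp [Adjacent]) (by simp [onBoard]) (by simp)
          (marchD3 _ (by simp) (by simp) (by simp) (by simp) (by simp) (by simp))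
      · push_neg at h2
        obtain ⟨h1, h2, h3, h4, h5⟩ := h2
        exact dstep (2,6) (by simp [Adjacent]) (by simp [onBoard])
          (nmi (fun e => h3 e.symm) (by simp))
          (marchR6 _ (nmi (fun e => h1 e.symm) (by simp))
            (nmi (fun e => h2 e.symm) (by simp))
            (nmi (fun e => h4 e.symm) (by simp))
            (nmi (fun e => h5 e.symm) (by simp)))
    · exact dstep (2,5) (by simp [Adjacent]) (by simp [onBoard])
        (nmi (fun e => h1 e.symm) (by simp)) (from25 s1)
  · -- D moves first
    exact dstep (2,5) (by simp [Adjacent]) (by simp [onBoard]) (by simp)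
      (marchL5 _ (by simp) (by simp) (by simp) (by simp) (by simp) (by simp)
        (by simp) (by simp))
end
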